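/- arXiv:2601.05471 — 3 statements merged into one kernel-verified Lean document; each statement's English description precedes it below -/
import Mathlib

section
/- Let c₀ be a nonpositive integer and let a, b ∈ ℂ be such that c₀ − a − b is a positive integer, c₀ − b is a nonpositive integer, and c₀ − a is not a nonpositive integer. Then the Gamma-quotient Γ(c₀+ε) Γ(c₀−a−b+ε) / (Γ(c₀−a+ε) Γ(c₀−b+ε)) converges, as ε → 0 along nonzero complex ε, to a nonzero limit; explicitly, writing c₀ − b = −q with q a nonnegative integer, the limit equals ((−1)^{(−c₀)+q} · q!/(−c₀)!) · Γ(c₀−a−b)/Γ(c₀−a). (By the Gauss summation formula, this quotient represents the regularized value of the hypergeometric series ₂F₁(a, b; c₀+ε; 1), so this proves existence and non-vanishing of the regularized value ₂F₁(a, b; c₀; 1).) -/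
/-!
Γ has a simple pole at `-n` with residue `(-1)^n / n!`: this follows from the residue `1`
at `0` and the recurrence `Γ(s) = Γ(s + 1) / s`. Since `c₀` and `c₀ - b` are both poles,
the two simple poles in the quotient cancel, and the limit is the ratio of the residues
times `Γ(c₀-a-b)/Γ(c₀-a)`, which is finite and nonzero because neither `c₀ - a - b` nor
`c₀ - a` is a pole.
-/

open Filter Topology Nat

namespace Complex

theorem tendsto_self_mul_Gamma_sub_nat_nhds_zero (n : ℕ) :
    Tendsto (fun ε : ℂ => ε * Gamma (ε - n)) (𝓝[≠] 0) (𝓝 ((-1) ^ n / n !)) := by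
  induction n with
  | zero => simpa using tendsto_self_mul_Gamma_nhds_zero
  | succ n ih =>
    have hshift : Tendsto (fun ε : ℂ => ε - (n + 1)) (𝓝[≠] 0) (𝓝 (-(n + 1))) := by
      refine tendsto_nhdsWithin_of_tendsto_nhds ?_
      simpa using (continuous_sub_right ((n : ℂ) + 1)).tendsto 0
    have hne : (-(n + 1) : ℂ) ≠ 0 := neg_ne_zero.mpr n.cast_add_one_ne_zero
    have hlim := ih.div hshift hne
    rw [show ((-1) ^ n / n ! / -(n + 1) : ℂ) = (-1) ^ (n + 1) / (n + 1)! by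
      push_cast [factorial_succ]; field_simp; ring] at hlim
    refine hlim.congr' ?_
    filter_upwards [hshift.eventually_ne hne] with ε hε
    have hrec := Gamma_add_one _ hε
    rw [show ε - (n + 1) + 1 = ε - n by ring] at hrec
    simp only [Pi.div_apply, hrec, cast_add_one]
    field_simp

theorem tendsto_Gamma_add_nhds_zero {z : ℂ} (hz : ∀ m : ℕ, z ≠ -m) :
    Tendsto (fun ε : ℂ => Gamma (z + ε)) (𝓝 0) (𝓝 (Gamma z)) := by
  have hshift : Tendsto (fun ε : ℂ => z + ε) (𝓝 0) (𝓝 z) := by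
    simpa using (continuous_const_add z).tendsto 0
  exact (differentiableAt_Gamma z hz).continuousAt.tendsto.comp hshift

theorem tendsto_Gamma_quotient_sub_nat {x y : ℂ} (hx : ∀ m : ℕ, x ≠ -m)
    (hy : ∀ m : ℕ, y ≠ -m) (n q : ℕ) :
    Tendsto (fun ε : ℂ => Gamma (ε - n) * Gamma (x + ε) / (Gamma (y + ε) * Gamma (ε - q)))
      (𝓝[≠] 0) (𝓝 ((-1) ^ (n + q) * q ! / n ! * Gamma x / Gamma y)) := by
  have hq : ((-1) ^ q / q ! : ℂ) ≠ 0 := by simp [factorial_ne_zero]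
  have hlim := ((tendsto_self_mul_Gamma_sub_nat_nhds_zero n).div
    (tendsto_self_mul_Gamma_sub_nat_nhds_zero q) hq).mul
    (((tendsto_Gamma_add_nhds_zero hx).div (tendsto_Gamma_add_nhds_zero hy)
      (Gamma_ne_zero hy)).mono_left nhdsWithin_le_nhds)
  have hsign : ((-1 : ℂ) ^ q)⁻¹ = (-1) ^ q := by rw [← inv_pow, inv_neg_one]
  rw [div_div_eq_mul_div, div_eq_mul_inv _ ((-1 : ℂ) ^ q), hsign,
    show ((-1) ^ n / n ! * q ! * (-1) ^ q * (Gamma x / Gamma y) : ℂ) =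
      (-1) ^ (n + q) * q ! / n ! * Gamma x / Gamma y by ring] at hlim
  refine hlim.congr' ?_
  filter_upwards [self_mem_nhdsWithin] with ε (hε : ε ≠ 0)
  simp only [Pi.div_apply, mul_div_mul_left _ _ hε]
  ring

end Complex

/-- Let `c₀` be a nonpositive integer and `a b : ℂ` with `c₀ - a - b` a positive integer,
`c₀ - b = -q` a nonpositive integer, and `c₀ - a` not a nonpositive integer.  Then the
Gamma-quotient `Γ(c₀+ε) Γ(c₀-a-b+ε) / (Γ(c₀-a+ε) Γ(c₀-b+ε))` converges, as `ε → 0` along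
nonzero complex `ε`, to the nonzero limit
`((-1)^{(-c₀)+q} q!/(-c₀)!) · Γ(c₀-a-b)/Γ(c₀-a)`. -/
theorem regularized_gauss_value_exists_nonzero
    (c₀ : ℤ) (hc : c₀ ≤ 0) (a b : ℂ)
    (p : ℕ) (hp : 0 < p) (hab : (c₀ : ℂ) - a - b = (p : ℂ))
    (q : ℕ) (hqb : (c₀ : ℂ) - b = -(q : ℂ))
    (ha : ∀ m : ℕ, (c₀ : ℂ) - a ≠ -(m : ℂ)) :
    Tendsto
        (fun ε : ℂ =>
          Complex.Gamma ((c₀ : ℂ) + ε) * Complex.Gamma ((c₀ : ℂ) - a - b + ε) /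
            (Complex.Gamma ((c₀ : ℂ) - a + ε) * Complex.Gamma ((c₀ : ℂ) - b + ε)))
        (nhdsWithin (0 : ℂ) {(0 : ℂ)}ᶜ)
        (nhds ((-1 : ℂ) ^ ((-c₀).toNat + q) * (Nat.factorial q : ℂ) /
            (Nat.factorial (-c₀).toNat : ℂ) *
            Complex.Gamma ((c₀ : ℂ) - a - b) / Complex.Gamma ((c₀ : ℂ) - a))) ∧
      (-1 : ℂ) ^ ((-c₀).toNat + q) * (Nat.factorial q : ℂ) /
          (Nat.factorial (-c₀).toNat : ℂ) *
          Complex.Gamma ((c₀ : ℂ) - a - b) / Complex.Gamma ((c₀ : ℂ) - a) ≠ 0 := by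
  set n := (-c₀).toNat with hn
  have hc₀ : (c₀ : ℂ) = -n := by
    rw [show c₀ = -(n : ℤ) by omega]
    push_cast; rfl
  have hab' : ∀ m : ℕ, (c₀ : ℂ) - a - b ≠ -m := by
    intro m h
    have hsum : (p + m : ℂ) = 0 := by linear_combination hab.symm.trans h
    have : p + m = 0 := by exact_mod_cast hsum
    omega
  refine ⟨?_, by simp [Complex.Gamma_ne_zero hab', Complex.Gamma_ne_zero ha, factorial_ne_zero]⟩
  have hpole : ∀ ε : ℂ, ε - n = c₀ + ε := fun ε => by rw [hc₀]; ring
  have hpole' : ∀ ε : ℂ, ε - q = c₀ - b + ε := fun ε => by rw [hqb]; ring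
  simpa only [hpole, hpole'] using Complex.tendsto_Gamma_quotient_sub_nat hab' ha n q
end

section
/- Let k and n be positive integers with n ≥ k. Then |SST(δ_k, n)| ≠ 0 and, as an identity of rational numbers, |SST(δ_{k+1}, n)| / |SST(δ_k, n)| = (2^{2k} (k!)² / (2k)!) · P_k^{(α,β)}(−1), where α = (n−k−1)/2 and β = (−n−k−1)/2. -/
/-- `(i,j)` (1-indexed) is a box of the Young diagram of the staircase `δ_k`. -/
def StairBox (k : ℕ) (p : ℕ × ℕ) : Prop := 1 ≤ p.1 ∧ 1 ≤ p.2 ∧ p.1 + p.2 ≤ k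

/-- `T` is a semistandard Young tableau of staircase shape `δ_k` with entries in `{1,…,n}`:
entries lie in `{1,…,n}` on boxes, vanish off boxes, weakly increase along rows, and
strictly increase down columns. -/
def IsSSTStair (k n : ℕ) (T : ℕ × ℕ → ℕ) : Prop :=
  (∀ p, StairBox k p → 1 ≤ T p ∧ T p ≤ n) ∧
  (∀ p, ¬ StairBox k p → T p = 0) ∧
  (∀ p q, StairBox k p → StairBox k q → q.1 = p.1 → q.2 = p.2 + 1 → T p ≤ T q) ∧
  (∀ p q, StairBox k p → StairBox k q → q.1 = p.1 + 1 → q.2 = p.2 → T p < T q)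

/-- The number of semistandard Young tableaux of shape `δ_k` with entries in `{1,…,n}`. -/
noncomputable def SSTcard (k n : ℕ) : ℕ := Nat.card {T : ℕ × ℕ → ℕ // IsSSTStair k n T}

/-- Generalized binomial coefficient `binom(x, m) = x(x-1)⋯(x-m+1)/m!`. -/
def genBinom (x : ℚ) (m : ℕ) : ℚ := (∏ i ∈ Finset.range m, (x - i)) / (Nat.factorial m)

/-- The Jacobi polynomial
`P_k^{(a,b)}(z) = Σ_{r=0}^{k} binom(k+a, k-r) binom(k+b, r) ((z-1)/2)^r ((z+1)/2)^{k-r}`. -/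
def jacobiP (k : ℕ) (a b z : ℚ) : ℚ :=
  ∑ r ∈ Finset.range (k + 1),
    genBinom ((k : ℚ) + a) (k - r) * genBinom ((k : ℚ) + b) r *
      ((z - 1) / 2) ^ r * ((z + 1) / 2) ^ (k - r)

/-!
Deleting the entries `n + 1` from a semistandard tableau with entries `≤ n + 1` leaves one with
entries `≤ n` whose shape `μ` interlaces the original shape `λ` (Gelfand–Tsetlin branching). In
terms of shifted parts `ℓ_i = λ_{n-i} + i`, interlacing means that each shifted part of `μ` lies in
the interval `[ℓ_i(λ), ℓ_{i+1}(λ))`; multilinearity of the determinant and the hockey-stick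
identity for falling factorials sum the Vandermonde determinant over this box of vectors, and
induction on `n` gives Weyl's formula `|SST(λ, n)| · ∏_{j<n} j! = ∏_{i<j} (ℓ_j - ℓ_i)`.
For the staircases `δ_{k+1}` and `δ_k`, raising `n` by one multiplies the two Vandermonde
products by factors that differ only by swapping `n - k + 1 + 2t` with `n - k + 2 + 2t`, `t < k`,
so by induction from `n = k` their ratio is `(2^k k! / (2k)!) ∏_{t<k} (n - k + 1 + 2t)`. Finally
`P_k^{(α,β)}(-1) = (-1)^k binom(k + β, k)`, which is that product divided by `2^k k!`.
-/

open Finset Matrix Polynomial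

theorem descPochhammer_eval_add_one_sub {R : Type*} [CommRing R] (j : ℕ) (t : R) :
    (descPochhammer R (j + 1)).eval (t + 1) - (descPochhammer R (j + 1)).eval t
      = (j + 1) * (descPochhammer R j).eval t := by
  have hshift :
      (descPochhammer R (j + 1)).eval (t + 1) = (t + 1) * (descPochhammer R j).eval t := by
    simp only [descPochhammer_eval_eq_prod_range, prod_range_succ']
    push_cast
    simp only [add_sub_add_right_eq_sub, sub_zero, mul_comm]
  rw [hshift, descPochhammer_succ_eval]
  ring

theorem mul_sum_Ico_descPochhammer_eval {R : Type*} [CommRing R] (j : ℕ) {a b : ℕ} (hab : a ≤ b) :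
    ((j : R) + 1) * ∑ t ∈ Ico a b, (descPochhammer R j).eval (t : R)
      = (descPochhammer R (j + 1)).eval (b : R) - (descPochhammer R (j + 1)).eval (a : R) := by
  rw [mul_sum, ← sum_Ico_sub (fun t : ℕ => (descPochhammer R (j + 1)).eval (t : R)) hab]
  refine sum_congr rfl fun t _ => ?_
  rw [Nat.cast_succ, descPochhammer_eval_add_one_sub]

theorem Matrix.det_eq_det_succ_sub_castSucc {R : Type*} [CommRing R] {n : ℕ}
    (M : Matrix (Fin (n + 1)) (Fin (n + 1)) R) (hM : ∀ i, M i 0 = 1) :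
    M.det = (of fun i j : Fin n => M i.succ j.succ - M i.castSucc j.succ).det := by
  let D : Matrix (Fin (n + 1)) (Fin (n + 1)) R :=
    of fun i j => Fin.cases (M 0 j) (fun i => M i.succ j - M i.castSucc j) i
  rw [det_eq_of_forall_row_eq_smul_add_pred (A := M) (B := D) (fun _ => 1) (fun j => rfl)
    (fun i j => by simp [D]), det_succ_column_zero, sum_eq_single 0]
  · simp only [Fin.coe_ofNat_eq_mod, Nat.zero_mod, pow_zero, of_apply, hM, Fin.cases_zero, one_mul,
      Fin.succAbove_zero, D]
    rfl
  · intro i _ hi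
    obtain ⟨i, rfl⟩ := Fin.eq_succ_of_ne_zero hi
    simp [D, hM]
  · simp

theorem Matrix.det_vandermonde_eq_det_descPochhammer {R : Type*} [CommRing R] [IsDomain R] {n : ℕ}
    (v : Fin n → R) :
    (vandermonde v).det = (of fun i j : Fin n => (descPochhammer R j).eval (v i)).det :=
  det_eval_matrixOfPolynomials_eq_det_vandermonde v _
    (fun j => descPochhammer_natDegree R j) (fun j => monic_descPochhammer R j)

theorem Matrix.sum_det_of_piFinset {R ι : Type*} [CommRing R] [DecidableEq ι] {m : ℕ}
    (A : Fin m → Finset ι) (f : Fin m → ι → R) :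
    ∑ w ∈ Fintype.piFinset A, (of fun i j : Fin m => f j (w i)).det
      = (of fun i j : Fin m => ∑ t ∈ A i, f j t).det := by
  have h := (detRowAlternating : (Fin m → R) [⋀^Fin m]→ₗ[R] R).toMultilinearMap.map_sum_finset
    (fun _ t j => f j t) A
  refine h.symm.trans (congrArg det ?_)
  ext i j
  simp [Finset.sum_apply]

theorem Matrix.factorial_mul_sum_det_vandermonde {R : Type*} [CommRing R] [IsDomain R] {n : ℕ}
    (Z : Fin (n + 1) → ℕ) (hZ : ∀ i : Fin n, Z i.castSucc ≤ Z i.succ) :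
    (n.factorial : R) * ∑ w ∈ Fintype.piFinset fun i : Fin n => Ico (Z i.castSucc) (Z i.succ),
        (vandermonde fun i => (w i : R)).det
      = (vandermonde fun i => (Z i : R)).det := by
  have hfact : (n.factorial : R) = ∏ j : Fin n, ((j : R) + 1) := by
    rw [Fin.prod_univ_eq_prod_range (fun j => (j : R) + 1), ← prod_range_add_one_eq_factorial]
    push_cast
    rfl
  simp only [det_vandermonde_eq_det_descPochhammer]
  rw [sum_det_of_piFinset _ fun j (t : ℕ) => (descPochhammer R j).eval (t : R), hfact,
    ← det_mul_row, det_eq_det_succ_sub_castSucc _ (by simp)]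
  congr 1
  ext i j
  simp only [of_apply, Fin.val_succ]
  exact mul_sum_Ico_descPochhammer_eval j (hZ i)

theorem Matrix.det_vandermonde_cons_zero {R : Type*} [CommRing R] {n : ℕ} (u : Fin n → R) :
    (vandermonde (Fin.cons 0 u : Fin (n + 1) → R)).det = (∏ i, u i) * (vandermonde u).det := by
  simp only [det_vandermonde, Fin.prod_univ_succ, Fin.prod_Ioi_zero, Fin.prod_Ioi_succ,
    Fin.cons_zero, Fin.cons_succ, sub_zero]

theorem factorial_two_mul_eq_prod_odd (k : ℕ) :
    ((2 * k).factorial : ℚ) = 2 ^ k * k.factorial * ∏ i ∈ range k, (2 * (i : ℚ) + 1) := by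
  induction k with
  | zero => simp
  | succ k ih =>
    rw [show 2 * (k + 1) = 2 * k + 1 + 1 by ring, Nat.factorial_succ, Nat.factorial_succ,
      Nat.factorial_succ, prod_range_succ]
    push_cast
    rw [ih]
    ring

namespace SSYT

/-- Shapes are `lam : ℕ → ℕ` with `lam r` the length of row `r ≥ 1`; `lam 0` is ignored. -/
def Box (lam : ℕ → ℕ) (p : ℕ × ℕ) : Prop := 1 ≤ p.1 ∧ 1 ≤ p.2 ∧ p.2 ≤ lam p.1

instance (lam : ℕ → ℕ) (p : ℕ × ℕ) : Decidable (Box lam p) :=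
  inferInstanceAs (Decidable (_ ∧ _ ∧ _))

def IsSST (lam : ℕ → ℕ) (n : ℕ) (T : ℕ × ℕ → ℕ) : Prop :=
  (∀ p, Box lam p → 1 ≤ T p ∧ T p ≤ n) ∧
  (∀ p, ¬ Box lam p → T p = 0) ∧
  (∀ p q, Box lam p → Box lam q → q.1 = p.1 → q.2 = p.2 + 1 → T p ≤ T q) ∧
  (∀ p q, Box lam p → Box lam q → q.1 = p.1 + 1 → q.2 = p.2 → T p < T q)

noncomputable def card (lam : ℕ → ℕ) (n : ℕ) : ℕ := Nat.card {T : ℕ × ℕ → ℕ // IsSST lam n T}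

variable {lam : ℕ → ℕ} {n : ℕ} {T : ℕ × ℕ → ℕ}

theorem IsSST.le (hT : IsSST lam n T) (p : ℕ × ℕ) : T p ≤ n := by
  by_cases hb : Box lam p
  · exact (hT.1 p hb).2
  · simp [hT.2.1 p hb]

theorem IsSST.ext {T' : ℕ × ℕ → ℕ} (hT : IsSST lam n T) (hT' : IsSST lam n T')
    (h : ∀ p, Box lam p → T p = T' p) : T = T' := by
  funext p
  by_cases hb : Box lam p
  · exact h p hb
  · rw [hT.2.1 p hb, hT'.2.1 p hb]

theorem finite_sst (hlen : ∀ i, n < i → lam i = 0) :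
    Finite {T : ℕ × ℕ → ℕ // IsSST lam n T} := by
  let s : Finset (ℕ × ℕ) := range (n + 1) ×ˢ range ((range (n + 1)).sup lam + 1)
  refine Finite.of_injective (fun (T : {T // IsSST lam n T}) (p : s) =>
    (⟨T.1 p, Nat.lt_succ_of_le (T.2.le p)⟩ : Fin (n + 1))) fun T₁ T₂ h => ?_
  refine Subtype.ext (T₁.2.ext T₂.2 fun p hb => ?_)
  have hrow : p.1 ≤ n := by
    by_contra hgt
    have := hlen p.1 (by omega)
    have := hb.2.2
    have := hb.2.1
    omega
  have hcol : p.2 ≤ (range (n + 1)).sup lam :=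
    hb.2.2.trans (le_sup (mem_range.2 (by omega)))
  have hp : p ∈ s := mem_product.2 ⟨mem_range.2 (by omega), mem_range.2 (by omega)⟩
  simpa using congrArg Fin.val (congrFun h ⟨p, hp⟩)

theorem card_zero (hlen : ∀ i, 0 < i → lam i = 0) : card lam 0 = 1 := by
  have hnb : ∀ p, ¬ Box lam p := fun p hb => by
    have := hlen p.1 hb.1
    have := hb.2.2
    have := hb.2.1
    omega
  have h0 : IsSST lam 0 (fun _ => 0) :=
    ⟨fun p hp => absurd hp (hnb p), fun _ _ => rfl,
      fun p _ hp => absurd hp (hnb p), fun p _ hp => absurd hp (hnb p)⟩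
  rw [card, Nat.card_eq_one_iff_unique]
  exact ⟨⟨fun T₁ T₂ => Subtype.ext (T₁.2.ext T₂.2 fun p hp => absurd hp (hnb p))⟩, ⟨⟨_, h0⟩⟩⟩

theorem card_ne_zero (hlen : ∀ i, n < i → lam i = 0) : card lam n ≠ 0 := by
  have hT : IsSST lam n fun p => if Box lam p then p.1 else 0 := by
    refine ⟨fun p hp => ?_, fun p hp => if_neg hp, fun p q hp hq h _ => ?_,
      fun p q hp hq h _ => ?_⟩
    · simp only [if_pos hp]
      refine ⟨hp.1, not_lt.1 fun hlt => ?_⟩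
      have := hlen p.1 hlt ▸ hp.2.2
      have := hp.2.1
      omega
    · simp only [if_pos hp, if_pos hq, h, le_rfl]
    · simp only [if_pos hp, if_pos hq, h, Nat.lt_succ_self]
  exact Nat.card_ne_zero.2 ⟨⟨⟨_, hT⟩⟩, finite_sst hlen⟩

theorem IsSST.row_mono (hT : IsSST lam n T) {r j' : ℕ} (hj' : 1 ≤ j') :
    ∀ j, j' ≤ j → Box lam (r, j) → T (r, j') ≤ T (r, j) := by
  refine Nat.le_induction (fun _ => le_rfl) fun j hj ih hb => ?_
  have hb' : Box lam (r, j) := ⟨hb.1, by omega, (Nat.le_succ j).trans hb.2.2⟩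
  exact (ih hb').trans (hT.2.2.1 (r, j) (r, j + 1) hb' hb rfl rfl)

theorem IsSST.row_le (hanti : ∀ i, 1 ≤ i → lam (i + 1) ≤ lam i) (hT : IsSST lam n T) :
    ∀ r j, Box lam (r, j) → r ≤ T (r, j) := by
  intro r
  induction r with
  | zero => intro j _; omega
  | succ r ih =>
    intro j hb
    rcases Nat.eq_zero_or_pos r with rfl | hr
    · exact (hT.1 _ hb).1
    · have hb' : Box lam (r, j) := ⟨hr, hb.2.1, hb.2.2.trans (hanti r hr)⟩
      have := hT.2.2.2 (r, j) (r + 1, j) hb' hb rfl rfl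
      have := ih j hb'
      omega

theorem eq_Icc_card_of_downward_closed {s : Finset ℕ} {m : ℕ} (hsub : s ⊆ Icc 1 m)
    (hdc : ∀ j ∈ s, ∀ j', 1 ≤ j' → j' ≤ j → j' ∈ s) : s = Icc 1 #s := by
  rcases s.eq_empty_or_nonempty with rfl | hne
  · simp
  have hmax : s = Icc 1 (s.max' hne) := by
    ext j
    refine ⟨fun hj => mem_Icc.2 ⟨(mem_Icc.1 (hsub hj)).1, s.le_max' j hj⟩, fun hj => ?_⟩
    exact hdc _ (s.max'_mem hne) j (mem_Icc.1 hj).1 (mem_Icc.1 hj).2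
  conv_rhs => rw [hmax]
  simpa using hmax

/-- The length of row `r` of the subtableau of `T` formed by the entries `≤ n`. -/
def subShape (lam : ℕ → ℕ) (n : ℕ) (T : ℕ × ℕ → ℕ) (r : ℕ) : ℕ :=
  #{j ∈ Icc 1 (lam r) | T (r, j) ≤ n}

theorem subShape_le (r : ℕ) : subShape lam n T r ≤ lam r :=
  (card_filter_le _ _).trans (by simp)

theorem IsSST.le_iff_le_subShape {m : ℕ} (hT : IsSST lam m T) {r j : ℕ} (hb : Box lam (r, j)) :
    T (r, j) ≤ n ↔ j ≤ subShape lam n T r := by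
  have hIcc := eq_Icc_card_of_downward_closed
    (filter_subset (fun j => T (r, j) ≤ n) (Icc 1 (lam r))) fun i hi i' h1 h2 => by
      rw [mem_filter, mem_Icc] at hi ⊢
      exact ⟨⟨h1, by omega⟩, (hT.row_mono h1 i h2 ⟨hb.1, by omega, hi.1.2⟩).trans hi.2⟩
  have hj : j ∈ Icc 1 (lam r) := mem_Icc.2 ⟨hb.2.1, hb.2.2⟩
  rw [subShape, ← mem_Icc.trans (and_iff_right hb.2.1), ← hIcc, mem_filter, and_iff_right hj]

theorem IsSST.succ_le_subShape (hanti : ∀ i, 1 ≤ i → lam (i + 1) ≤ lam i)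
    (hT : IsSST lam (n + 1) T) {r : ℕ} (hr : 1 ≤ r) : lam (r + 1) ≤ subShape lam n T r := by
  have hsub : Icc 1 (lam (r + 1)) ⊆ {j ∈ Icc 1 (lam r) | T (r, j) ≤ n} := fun j hj => by
    rw [mem_Icc] at hj
    have hq : Box lam (r + 1, j) := ⟨by omega, hj.1, hj.2⟩
    have hp : Box lam (r, j) := ⟨hr, hj.1, hj.2.trans (hanti r hr)⟩
    have := hT.2.2.2 (r, j) (r + 1, j) hp hq rfl rfl
    have := (hT.1 _ hq).2
    exact mem_filter.2 ⟨mem_Icc.2 ⟨hj.1, hp.2.2⟩, by omega⟩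
  simpa [subShape] using card_le_card hsub

theorem IsSST.subShape_eq_zero (hanti : ∀ i, 1 ≤ i → lam (i + 1) ≤ lam i)
    (hlen : ∀ i, n + 1 < i → lam i = 0) (hT : IsSST lam (n + 1) T) {r : ℕ} (hr : n < r) :
    subShape lam n T r = 0 := by
  rcases (show n + 1 < r ∨ r = n + 1 by omega) with h | rfl
  · simp [subShape, hlen r h]
  · rw [subShape, card_eq_zero, filter_eq_empty_iff]
    intro j hj
    have := hT.row_le hanti (n + 1) j ⟨by omega, (mem_Icc.1 hj).1, (mem_Icc.1 hj).2⟩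
    omega

def restrict (nu : ℕ → ℕ) (T : ℕ × ℕ → ℕ) (p : ℕ × ℕ) : ℕ := if Box nu p then T p else 0

def extend (lam nu : ℕ → ℕ) (n : ℕ) (T : ℕ × ℕ → ℕ) (p : ℕ × ℕ) : ℕ :=
  if Box lam p then (if Box nu p then T p else n + 1) else 0

section Branching

variable {nu : ℕ → ℕ}

theorem Box.of_le (hsub : ∀ r, nu r ≤ lam r) (p : ℕ × ℕ) (hp : Box nu p) : Box lam p :=
  ⟨hp.1, hp.2.1, hp.2.2.trans (hsub _)⟩

theorem isSST_restrict (hsub : ∀ r, nu r ≤ lam r) (hT : IsSST lam (n + 1) T)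
    (hle : ∀ p, Box nu p → T p ≤ n) : IsSST nu n (restrict nu T) := by
  have hb := Box.of_le hsub
  refine ⟨fun p hp => ?_, fun p hp => if_neg hp, fun p q hp hq => ?_, fun p q hp hq => ?_⟩
  · rw [restrict, if_pos hp]
    exact ⟨(hT.1 p (hb p hp)).1, hle p hp⟩
  · simp only [restrict, if_pos hp, if_pos hq]
    exact hT.2.2.1 p q (hb p hp) (hb q hq)
  · simp only [restrict, if_pos hp, if_pos hq]
    exact hT.2.2.2 p q (hb p hp) (hb q hq)

theorem isSST_extend (hlow : ∀ r, 1 ≤ r → lam (r + 1) ≤ nu r) {T : ℕ × ℕ → ℕ}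
    (hT : IsSST nu n T) : IsSST lam (n + 1) (extend lam nu n T) := by
  have hval : ∀ p, Box lam p → 1 ≤ extend lam nu n T p ∧ extend lam nu n T p ≤ n + 1 := by
    intro p hp
    by_cases hq : Box nu p
    · simp only [extend, if_pos hp, if_pos hq]
      exact ⟨(hT.1 p hq).1, (hT.1 p hq).2.trans (Nat.le_succ n)⟩
    · simp [extend, if_pos hp, if_neg hq]
  refine ⟨hval, fun p hp => if_neg hp, ?_, ?_⟩
  · rintro ⟨r, j⟩ q hp hq h1 h2
    obtain rfl : q = (r, j + 1) := Prod.ext h1 h2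
    by_cases hbq : Box nu (r, j + 1)
    · have hbp : Box nu (r, j) := ⟨hbq.1, hp.2.1, (Nat.le_succ j).trans hbq.2.2⟩
      simp only [extend, if_pos hp, if_pos hq, if_pos hbp, if_pos hbq]
      exact hT.2.2.1 _ _ hbp hbq rfl rfl
    · have : extend lam nu n T (r, j + 1) = n + 1 := by rw [extend, if_pos hq, if_neg hbq]
      exact this ▸ (hval _ hp).2
  · rintro ⟨r, j⟩ q hp hq h1 h2
    obtain rfl : q = (r + 1, j) := Prod.ext h1 h2
    have hbp : Box nu (r, j) := ⟨hp.1, hp.2.1, hq.2.2.trans (hlow r hp.1)⟩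
    have hTp : extend lam nu n T (r, j) = T (r, j) := by rw [extend, if_pos hp, if_pos hbp]
    by_cases hbq : Box nu (r + 1, j)
    · rw [hTp, extend, if_pos hq, if_pos hbq]
      exact hT.2.2.2 _ _ hbp hbq rfl rfl
    · rw [hTp, extend, if_pos hq, if_neg hbq]
      exact Nat.lt_succ_of_le (hT.1 _ hbp).2

theorem IsSST.le_iff_box {m : ℕ} (hT : IsSST lam m T)
    (hnu : ∀ r, 1 ≤ r → subShape lam n T r = nu r) {p : ℕ × ℕ} (hp : Box lam p) :
    T p ≤ n ↔ Box nu p := by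
  rw [hT.le_iff_le_subShape hp, hnu p.1 hp.1]
  exact ⟨fun h => ⟨hp.1, hp.2.1, h⟩, fun h => h.2.2⟩

theorem subShape_extend (hsub : ∀ r, nu r ≤ lam r) {T : ℕ × ℕ → ℕ} (hT : IsSST nu n T) {r : ℕ}
    (hr : 1 ≤ r) : subShape lam n (extend lam nu n T) r = nu r := by
  have : {j ∈ Icc 1 (lam r) | extend lam nu n T (r, j) ≤ n} = Icc 1 (nu r) := by
    ext j
    simp only [mem_filter, mem_Icc]
    by_cases hj : 1 ≤ j ∧ j ≤ nu r
    · have hb : Box nu (r, j) := ⟨hr, hj⟩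
      simp only [extend, if_pos (Box.of_le hsub _ hb), if_pos hb]
      exact iff_of_true ⟨⟨hj.1, hj.2.trans (hsub r)⟩, (hT.1 _ hb).2⟩ hj
    · refine iff_of_false (fun ⟨hjl, hle⟩ => ?_) hj
      have hb : Box lam (r, j) := ⟨hr, hjl⟩
      have hnb : ¬ Box nu (r, j) := fun h => hj h.2
      rw [extend, if_pos hb, if_neg hnb] at hle
      omega
  simp [subShape, this]

def restrictEquiv (hsub : ∀ r, nu r ≤ lam r) (hlow : ∀ r, 1 ≤ r → lam (r + 1) ≤ nu r) :
    {T // IsSST lam (n + 1) T ∧ ∀ r, 1 ≤ r → subShape lam n T r = nu r} ≃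
      {T // IsSST nu n T} where
  toFun T := ⟨restrict nu T, isSST_restrict hsub T.2.1 fun p hp =>
    (T.2.1.le_iff_box T.2.2 (Box.of_le hsub p hp)).2 hp⟩
  invFun T := ⟨extend lam nu n T, isSST_extend hlow T.2, fun _ hr => subShape_extend hsub T.2 hr⟩
  left_inv T := by
    refine Subtype.ext (funext fun p => ?_)
    by_cases hp : Box lam p
    · have hle := (T.2.1.1 p hp).2
      by_cases hq : Box nu p
      · simp only [extend, restrict, if_pos hp, if_pos hq]
      · have := mt (T.2.1.le_iff_box T.2.2 hp).1 hq
        simp only [extend, if_pos hp, if_neg hq]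
        omega
    · simp only [extend, if_neg hp, T.2.1.2.1 p hp]
  right_inv T := by
    refine Subtype.ext (funext fun p => ?_)
    by_cases hp : Box nu p
    · simp only [restrict, extend, if_pos hp, if_pos (Box.of_le hsub p hp)]
    · simp only [restrict, if_neg hp, T.2.2.1 p hp]

end Branching

def toShape (n : ℕ) (y : Fin n → ℕ) (r : ℕ) : ℕ :=
  if h : 1 ≤ r ∧ r ≤ n then y ⟨r - 1, by omega⟩ else 0

def interlacing (lam : ℕ → ℕ) (n : ℕ) : Finset (Fin n → ℕ) :=
  Fintype.piFinset fun i => Icc (lam (i + 2)) (lam (i + 1))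

section Interlacing

variable {y : Fin n → ℕ}

theorem toShape_succ (i : Fin n) : toShape n y (i + 1) = y i := by
  rw [toShape, dif_pos ⟨by omega, i.isLt⟩]
  rfl

theorem toShape_eq_zero {r : ℕ} (hr : n < r) : toShape n y r = 0 := dif_neg (by omega)

theorem toShape_of_pos {r : ℕ} (h1 : 1 ≤ r) (h2 : r ≤ n) : toShape n y r = y ⟨r - 1, by omega⟩ :=
  dif_pos ⟨h1, h2⟩

theorem mem_interlacing :
    y ∈ interlacing lam n ↔ ∀ i : Fin n, lam (i + 2) ≤ y i ∧ y i ≤ lam (i + 1) := by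
  simp [interlacing]

theorem toShape_le (hy : y ∈ interlacing lam n) (r : ℕ) : toShape n y r ≤ lam r := by
  rw [toShape]
  split_ifs with h
  · have := ((mem_interlacing.1 hy) ⟨r - 1, by omega⟩).2
    rwa [show r - 1 + 1 = r by omega] at this
  · exact Nat.zero_le _

theorem le_toShape (hlen : ∀ i, n + 1 < i → lam i = 0) (hy : y ∈ interlacing lam n) {r : ℕ}
    (hr : 1 ≤ r) : lam (r + 1) ≤ toShape n y r := by
  rcases le_or_gt r n with h | h
  · have := ((mem_interlacing.1 hy) ⟨r - 1, by omega⟩).1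
    rw [Fin.val_mk, show r - 1 + 2 = r + 1 by omega] at this
    rwa [toShape_of_pos hr h]
  · simp [hlen (r + 1) (by omega)]

theorem toShape_antitone (hy : y ∈ interlacing lam n) {r : ℕ} (hr : 1 ≤ r) :
    toShape n y (r + 1) ≤ toShape n y r := by
  rcases le_or_gt (r + 1) n with h | h
  · rw [toShape_of_pos (by omega) h, toShape_of_pos hr (by omega)]
    have h1 := ((mem_interlacing.1 hy) ⟨r, by omega⟩).2
    have h2 := ((mem_interlacing.1 hy) ⟨r - 1, by omega⟩).1
    rw [show r - 1 + 2 = r + 1 by omega] at h2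
    exact h1.trans h2
  · simp [toShape_eq_zero h]

end Interlacing

theorem card_succ_eq_sum_card (hanti : ∀ i, 1 ≤ i → lam (i + 1) ≤ lam i)
    (hlen : ∀ i, n + 1 < i → lam i = 0) :
    card lam (n + 1) = ∑ y ∈ interlacing lam n, card (toShape n y) n := by
  have := finite_sst hlen
  let _ := Fintype.ofFinite {T // IsSST lam (n + 1) T}
  let f (T : {T // IsSST lam (n + 1) T}) : Fin n → ℕ := fun i => subShape lam n T.1 (i + 1)
  have hf : ∀ T ∈ (univ : Finset _), f T ∈ interlacing lam n := fun T _ =>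
    mem_interlacing.2 fun i => ⟨T.2.succ_le_subShape hanti (by omega), subShape_le _⟩
  rw [card, Nat.card_eq_fintype_card, ← card_univ, card_eq_sum_card_fiberwise hf]
  refine sum_congr rfl fun y hy => ?_
  have hfiber : ∀ T : {T // IsSST lam (n + 1) T},
      f T = y ↔ ∀ r, 1 ≤ r → subShape lam n T.1 r = toShape n y r := fun T => by
    refine ⟨fun h r hr => ?_, fun h => funext fun i => (h _ (by omega)).trans (toShape_succ i)⟩
    rcases le_or_gt r n with hrn | hrn
    · rw [toShape_of_pos hr hrn, ← h]
      simp only [f, Nat.sub_add_cancel hr]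
    · rw [T.2.subShape_eq_zero hanti hlen hrn, toShape_eq_zero hrn]
  rw [← Fintype.card_subtype, ← Nat.card_eq_fintype_card, card,
    ← Nat.card_congr (restrictEquiv (toShape_le hy) fun r hr => le_toShape hlen hy hr)]
  exact Nat.card_congr ((Equiv.subtypeEquivRight hfiber).trans
    (Equiv.subtypeSubtypeEquivSubtypeInter (IsSST lam (n + 1))
      fun T => ∀ r, 1 ≤ r → subShape lam n T r = toShape n y r))

def shiftedParts (lam : ℕ → ℕ) (m : ℕ) (i : Fin m) : ℕ := lam (m - i) + i

theorem shiftedParts_toShape {y : Fin n → ℕ} (t : Fin n) :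
    shiftedParts (toShape n y) n t = y t.rev + t := by
  rw [shiftedParts, toShape_of_pos (by omega) (by omega)]
  congr 3

theorem shiftedParts_castSucc_le_succ (hanti : ∀ i, 1 ≤ i → lam (i + 1) ≤ lam i) (i : Fin n) :
    shiftedParts lam (n + 1) i.castSucc ≤ shiftedParts lam (n + 1) i.succ := by
  simp only [shiftedParts, Fin.val_castSucc, Fin.val_succ]
  have := hanti (n - i) (by omega)
  rw [show n + 1 - i = n - i + 1 by omega, show n + 1 - (i + 1) = n - i by omega]
  omega

theorem sum_det_vandermonde_interlacing :
    ∑ y ∈ interlacing lam n, (vandermonde fun t => (shiftedParts (toShape n y) n t : ℚ)).det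
      = ∑ w ∈ Fintype.piFinset fun i : Fin n =>
          Ico (shiftedParts lam (n + 1) i.castSucc) (shiftedParts lam (n + 1) i.succ),
        (vandermonde fun t => (w t : ℚ)).det := by
  have hIco : ∀ (t : Fin n) (x : ℕ), x ∈ Ico (shiftedParts lam (n + 1) t.castSucc)
      (shiftedParts lam (n + 1) t.succ) ↔ lam (t.rev + 2) + t ≤ x ∧ x ≤ lam (t.rev + 1) + t := by
    intro t x
    simp only [mem_Ico, shiftedParts, Fin.val_castSucc, Fin.val_succ, Fin.val_rev]
    rw [show n + 1 - t = n - (t + 1) + 2 by omega, show n + 1 - (t + 1) = n - (t + 1) + 1 by omega]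
    omega
  refine sum_nbij' (fun y t => y t.rev + t) (fun w t => w t.rev - t.rev) (fun y hy => ?_)
    (fun w hw => ?_) (fun y _ => ?_) (fun w hw => ?_) (fun y _ => ?_)
  · refine Fintype.mem_piFinset.2 fun t => (hIco _ _).2 ?_
    have := (mem_interlacing.1 hy) t.rev
    omega
  · rw [Fintype.mem_piFinset] at hw
    refine mem_interlacing.2 fun t => ?_
    have := (hIco _ _).1 (hw t.rev)
    simp only [Fin.rev_rev] at this
    omega
  · funext t
    simp
  · rw [Fintype.mem_piFinset] at hw
    funext t
    have := (hIco _ _).1 (hw t)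
    simp only [Fin.rev_rev]
    omega
  · simp only [shiftedParts_toShape, Nat.cast_add]

theorem card_mul_prod_factorial_eq_det_vandermonde (n : ℕ) {lam : ℕ → ℕ}
    (hanti : ∀ i, 1 ≤ i → lam (i + 1) ≤ lam i) (hlen : ∀ i, n < i → lam i = 0) :
    (card lam n : ℚ) * ∏ j ∈ range n, (j.factorial : ℚ)
      = (vandermonde fun i => (shiftedParts lam n i : ℚ)).det := by
  induction n generalizing lam with
  | zero => simp [card_zero hlen]
  | succ n ih =>
    have hterm : ∀ y ∈ interlacing lam n,
        (card (toShape n y) n : ℚ) * ∏ j ∈ range n, (j.factorial : ℚ)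
          = (vandermonde fun t => (shiftedParts (toShape n y) n t : ℚ)).det := fun y hy =>
      ih (fun r hr => toShape_antitone hy hr) fun r hr => toShape_eq_zero hr
    calc (card lam (n + 1) : ℚ) * ∏ j ∈ range (n + 1), (j.factorial : ℚ)
        = n.factorial * ∑ y ∈ interlacing lam n,
            (card (toShape n y) n : ℚ) * ∏ j ∈ range n, (j.factorial : ℚ) := by
          rw [card_succ_eq_sum_card hanti hlen, prod_range_succ, Nat.cast_sum, sum_mul, mul_sum]
          exact sum_congr rfl fun _ _ => by ring
      _ = (vandermonde fun i => (shiftedParts lam (n + 1) i : ℚ)).det := by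
          rw [sum_congr rfl hterm, sum_det_vandermonde_interlacing,
            factorial_mul_sum_det_vandermonde _ (shiftedParts_castSucc_le_succ hanti)]

end SSYT

open SSYT

def stair (k i : ℕ) : ℕ := k - i

theorem SSTcard_eq_card (k n : ℕ) : SSTcard k n = SSYT.card (stair k) n := by
  have hbox : StairBox k = Box (stair k) := by
    funext p
    exact propext (by simp only [StairBox, Box, stair]; omega)
  simp only [SSTcard, SSYT.card, IsSSTStair, IsSST, hbox]

noncomputable def stairVandermonde (k n : ℕ) : ℚ :=
  (vandermonde fun i => (shiftedParts (stair k) n i : ℚ)).det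

theorem card_stair_mul_prod_factorial {k n : ℕ} (hk : k ≤ n + 1) :
    (SSYT.card (stair k) n : ℚ) * ∏ j ∈ range n, (j.factorial : ℚ) = stairVandermonde k n :=
  card_mul_prod_factorial_eq_det_vandermonde n (fun i _ => by simp only [stair]; omega)
    fun i hi => by simp only [stair]; omega

theorem stairVandermonde_succ_right {m n : ℕ} (hm : m ≤ n + 1) :
    stairVandermonde m (n + 1)
      = (∏ i : Fin n, ((shiftedParts (stair m) n i : ℚ) + 1)) * stairVandermonde m n := by
  have hcons : (fun i => (shiftedParts (stair m) (n + 1) i : ℚ))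
      = Fin.cons 0 fun i => (shiftedParts (stair m) n i : ℚ) + 1 := by
    funext i
    refine Fin.cases ?_ (fun i => ?_) i
    · simp only [shiftedParts, stair, Fin.cons_zero, Fin.val_zero]
      norm_cast
      omega
    · simp only [shiftedParts, stair, Fin.cons_succ, Fin.val_succ]
      norm_cast
      omega
  rw [stairVandermonde, hcons, det_vandermonde_cons_zero, det_vandermonde_add, stairVandermonde]

theorem prod_shiftedParts_stair_succ (k d : ℕ) :
    (∏ i : Fin (d + k), ((shiftedParts (stair (k + 1)) (d + k) i : ℚ) + 1)) *
        ∏ t ∈ range k, ((d : ℚ) + 1 + 2 * t)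
      = (∏ i : Fin (d + k), ((shiftedParts (stair k) (d + k) i : ℚ) + 1)) *
        ∏ t ∈ range k, ((d : ℚ) + 2 + 2 * t) := by
  simp only [shiftedParts]
  rw [Fin.prod_univ_eq_prod_range (fun i => ((stair (k + 1) (d + k - i) + i : ℕ) : ℚ) + 1),
    Fin.prod_univ_eq_prod_range (fun i => ((stair k (d + k - i) + i : ℕ) : ℚ) + 1),
    prod_range_add, prod_range_add]
  have hlow : ∀ m ∈ range d, ((stair (k + 1) (d + k - m) + m : ℕ) : ℚ) + 1
      = ((stair k (d + k - m) + m : ℕ) : ℚ) + 1 := fun m hm => by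
    have := mem_range.1 hm
    simp only [stair]
    congr 2
    omega
  have hhigh : ∀ m l, m = k + l → ∀ t ∈ range k,
      ((stair m (d + k - (d + t)) + (d + t) : ℕ) : ℚ) + 1 = d + (l + 1) + 2 * t := by
    rintro m l rfl t ht
    have := mem_range.1 ht
    simp only [stair]
    rw [show k + l - (d + k - (d + t)) + (d + t) = d + l + 2 * t by omega]
    push_cast
    ring
  rw [prod_congr rfl hlow, prod_congr rfl (hhigh _ 1 rfl), prod_congr rfl (hhigh k 0 rfl)]
  simp only [Nat.cast_one, Nat.cast_zero, zero_add, one_add_one_eq_two]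
  ring

theorem stairVandermonde_succ_left (k d : ℕ) :
    stairVandermonde (k + 1) (d + k) * ((2 * k).factorial : ℚ)
      = stairVandermonde k (d + k) * 2 ^ k * k.factorial *
          ∏ t ∈ range k, ((d : ℚ) + 1 + 2 * t) := by
  induction d with
  | zero =>
    have hshift : (fun i => (shiftedParts (stair (k + 1)) k i : ℚ))
        = fun i => (shiftedParts (stair k) k i : ℚ) + 1 := by
      funext i
      simp only [shiftedParts, stair]
      norm_cast
      omega
    rw [zero_add, stairVandermonde, hshift, det_vandermonde_add, factorial_two_mul_eq_prod_odd]
    simp only [stairVandermonde, Nat.cast_zero, zero_add, add_comm (1 : ℚ)]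
    ring
  | succ d ih =>
    rw [show d + 1 + k = d + k + 1 by ring, stairVandermonde_succ_right (by omega),
      stairVandermonde_succ_right (by omega)]
    have hcast : ∏ t ∈ range k, (((d + 1 : ℕ) : ℚ) + 1 + 2 * t)
        = ∏ t ∈ range k, ((d : ℚ) + 2 + 2 * t) :=
      prod_congr rfl fun t _ => by push_cast; ring
    rw [hcast]
    linear_combination (∏ i : Fin (d + k), ((shiftedParts (stair (k + 1)) (d + k) i : ℚ) + 1)) * ih
      + stairVandermonde k (d + k) * 2 ^ k * k.factorial * prod_shiftedParts_stair_succ k d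

theorem jacobiP_neg_one (k : ℕ) (a b : ℚ) :
    jacobiP k a b (-1) = (∏ i ∈ range k, ((i : ℚ) - (k + b))) / k.factorial := by
  rw [jacobiP, sum_range_succ, sum_eq_zero fun r hr => by
    rw [show ((-1 : ℚ) + 1) / 2 = 0 by norm_num, zero_pow (by rw [mem_range] at hr; omega), mul_zero]]
  simp only [genBinom, Nat.sub_self, range_zero, prod_empty, Nat.factorial_zero, Nat.cast_one,
    div_one, one_mul, pow_zero, mul_one, zero_add]
  rw [show ((-1 : ℚ) - 1) / 2 = -1 by norm_num, div_mul_eq_mul_div, mul_comm]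
  nth_rw 1 [← card_range k]
  rw [← prod_neg]
  simp only [neg_sub]

theorem jacobiP_neg_one_eq_prod_odd (k d : ℕ) :
    jacobiP k ((((d + k : ℕ) : ℚ) - k - 1) / 2) ((-((d + k : ℕ) : ℚ) - k - 1) / 2) (-1)
      = (∏ t ∈ range k, ((d : ℚ) + 1 + 2 * t)) / (2 ^ k * k.factorial) := by
  have h2 : (2 : ℚ) ^ k = ∏ _t ∈ range k, (2 : ℚ) := by simp
  rw [jacobiP_neg_one, ← div_div, h2, ← prod_div_distrib]
  congr 1
  refine prod_congr rfl fun i _ => ?_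
  push_cast
  ring

theorem sst_staircase_ratio_jacobi_general (k n : ℕ) (hkn : k ≤ n) :
    SSTcard k n ≠ 0 ∧
      (SSTcard (k + 1) n : ℚ) / (SSTcard k n : ℚ)
        = 2 ^ (2 * k) * (Nat.factorial k : ℚ) ^ 2 / (Nat.factorial (2 * k) : ℚ) *
            jacobiP k (((n : ℚ) - k - 1) / 2) ((-(n : ℚ) - k - 1) / 2) (-1) := by
  obtain ⟨d, rfl⟩ := Nat.exists_eq_add_of_le' hkn
  have hcard : SSYT.card (stair k) (d + k) ≠ 0 :=
    card_ne_zero fun i hi => by simp only [stair]; omega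
  have hF : ∏ j ∈ range (d + k), (j.factorial : ℚ) ≠ 0 :=
    prod_ne_zero_iff.2 fun j _ => by positivity
  have hV : stairVandermonde k (d + k) ≠ 0 := by
    rw [← card_stair_mul_prod_factorial (by omega)]
    exact mul_ne_zero (by exact_mod_cast hcard) hF
  refine ⟨SSTcard_eq_card k _ ▸ hcard, ?_⟩
  rw [SSTcard_eq_card, SSTcard_eq_card, ← mul_div_mul_right _ _ hF,
    card_stair_mul_prod_factorial (by omega), card_stair_mul_prod_factorial (by omega),
    jacobiP_neg_one_eq_prod_odd]
  field_simp
  linear_combination (2 : ℚ) ^ k * stairVandermonde_succ_left k d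

/-- For `1 ≤ k ≤ n`, `|SST(δ_k, n)| ≠ 0` and
`|SST(δ_{k+1}, n)| / |SST(δ_k, n)| = (2^{2k} (k!)² / (2k)!) · P_k^{(α,β)}(-1)` with
`α = (n-k-1)/2`, `β = (-n-k-1)/2`. -/
theorem sst_staircase_ratio_jacobi (k n : ℕ) (hk : 1 ≤ k) (hkn : k ≤ n) :
    SSTcard k n ≠ 0 ∧
      (SSTcard (k + 1) n : ℚ) / (SSTcard k n : ℚ)
        = 2 ^ (2 * k) * (Nat.factorial k : ℚ) ^ 2 / (Nat.factorial (2 * k) : ℚ) *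
            jacobiP k (((n : ℚ) - k - 1) / 2) ((-(n : ℚ) - k - 1) / 2) (-1) :=
  sst_staircase_ratio_jacobi_general k n hkn
end

section
/- Let k and n be positive integers with n ≥ k. Then the terminating Holman hypergeometric values at argument 1 for adjacent staircase shapes satisfy F^{(n)}_{δ_k}(1) / F^{(n)}_{δ_{k+1}}(1) = (2^{2k} (k!)² / (2k)!) · P_k^{(α,β)}(−1), where α = (n−k−1)/2 and β = (−n−k−1)/2; equivalently, (2k)! · F^{(n)}_{δ_k}(1) = 2^k · k! · (∏_{j=0}^{k−1} (n − k + 1 + 2j)) · F^{(n)}_{δ_{k+1}}(1). -/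
/-- The terminating Holman hypergeometric value `F^{(n)}_λ(z)` for a partition `λ`
(given by its 1-indexed row-length function, padded with zeros), with numerator parameters
`0, -1, …, -n+1`, denominator parameters `1`, and argument `z`:
`F^{(n)}_λ(z) = Σ_{κ} (Π_{i<j} (A_{ij} + κ_i - κ_j)/A_{ij}) (Π_i binom(i-1, κ_i)) (-z)^{Σ κ_i}`,
where `A_{ij} = λ_i - λ_j + j - i` and `κ_i` ranges over `0, …, i-1`. -/
noncomputable def holmanF (n : ℕ) (lam : ℕ → ℕ) (z : ℚ) : ℚ :=
  ∑ κ : (i : Fin n) → Fin (i.val + 1),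
    (∏ p ∈ Finset.univ.filter (fun p : Fin n × Fin n => p.1 < p.2),
        (((lam (p.1.val + 1) : ℚ) - (lam (p.2.val + 1) : ℚ) + (p.2.val : ℚ) - (p.1.val : ℚ)
            + ((κ p.1).val : ℚ) - ((κ p.2).val : ℚ)) /
          ((lam (p.1.val + 1) : ℚ) - (lam (p.2.val + 1) : ℚ) + (p.2.val : ℚ) - (p.1.val : ℚ)))) *
      (∏ i : Fin n, (Nat.choose i.val (κ i).val : ℚ)) *
      (-z) ^ (∑ i : Fin n, (κ i).val)

section HolmanAux

open Finset

private lemma alt_sum_choose_pow : ∀ N : ℕ, ∀ d ≤ N,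
    ∑ m ∈ Finset.range (N+1), (-1:ℚ)^m * (N.choose m) * (m:ℚ)^d
      = if d = N then (-1:ℚ)^N * (N.factorial:ℚ) else 0 := by
  intro N
  induction N with
  | zero => intro d hd; interval_cases d; simp
  | succ N IH =>
    intro d hd
    match d with
    | 0 =>
      have h2 : ∑ m ∈ Finset.range (N+2), (-1:ℚ)^m * ((N+1).choose m) * (m:ℚ)^0
          = ((∑ m ∈ Finset.range (N+2), (-1:ℤ)^m * ((N+1).choose m) : ℤ) : ℚ) := by
        push_cast
        exact Finset.sum_congr rfl (fun m _ => by ring)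
      rw [h2, Int.alternating_sum_range_choose]
      simp [Nat.succ_ne_zero]
    | e+1 =>
      have he : e ≤ N := by omega
      rw [Finset.sum_range_succ']
      simp only [Nat.cast_zero, ne_eq]
      have h0 : (-1:ℚ)^0 * ((N+1).choose 0) * (0:ℚ)^(e+1) = 0 := by simp
      rw [h0, add_zero]
      have hterm : ∀ m ∈ Finset.range (N+1),
          (-1:ℚ)^(m+1) * ((N+1).choose (m+1)) * ((m:ℚ)+1)^(e+1)
          = -(N+1) * ∑ j ∈ Finset.range (e+1), (e.choose j) * ((-1:ℚ)^m * (N.choose m) * (m:ℚ)^j) := by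
        intro m hm
        have hc : (((N+1).choose (m+1) : ℚ)) * ((m:ℚ)+1) = ((N:ℚ)+1) * (N.choose m) := by
          have := Nat.add_one_mul_choose_eq N m
          have : ((N+1) * N.choose m : ℕ) = ((N+1).choose (m+1) * (m+1) : ℕ) := this
          exact_mod_cast (congrArg (fun x : ℕ => (x:ℚ)) this).symm
        have hb : ((m:ℚ)+1)^e = ∑ j ∈ Finset.range (e+1), (m:ℚ)^j * (e.choose j) := by
          have := add_pow (m:ℚ) 1 e
          simp only [one_pow, mul_one] at this
          exact this
        calc (-1:ℚ)^(m+1) * ((N+1).choose (m+1)) * ((m:ℚ)+1)^(e+1)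
            = (-1:ℚ)^m * (-1) * ((((N+1).choose (m+1) : ℚ)) * ((m:ℚ)+1)) * ((m:ℚ)+1)^e := by ring
          _ = (-1:ℚ)^m * (-1) * (((N:ℚ)+1) * (N.choose m)) * ((m:ℚ)+1)^e := by rw [hc]
          _ = -(N+1) * ∑ j ∈ Finset.range (e+1), (e.choose j) * ((-1:ℚ)^m * (N.choose m) * (m:ℚ)^j) := by
              rw [hb, Finset.mul_sum]
              rw [Finset.mul_sum]
              exact Finset.sum_congr rfl (fun j _ => by ring)
      push_cast only [Nat.cast_add, Nat.cast_one]
      rw [Finset.sum_congr rfl hterm, ← Finset.mul_sum, Finset.sum_comm]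
      have : ∀ j ∈ Finset.range (e+1),
          (∑ m ∈ Finset.range (N+1), (e.choose j : ℚ) * ((-1:ℚ)^m * (N.choose m) * (m:ℚ)^j))
          = if j = N then (e.choose j : ℚ) * ((-1:ℚ)^N * (N.factorial:ℚ)) else 0 := by
        intro j hj
        have hj' := Finset.mem_range.mp hj
        rw [← Finset.mul_sum, IH j (by omega)]
        split <;> simp
      rw [Finset.sum_congr rfl this, Finset.sum_ite_eq' (Finset.range (e+1)) N]
      by_cases hE : e = N
      · subst hE
        rw [if_pos (Finset.self_mem_range_succ e), if_pos rfl]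
        simp [Nat.factorial_succ]
        ring
      · rw [if_neg (by simp only [Finset.mem_range]; omega), mul_zero,
            if_neg (by omega)]

private lemma keysum' (N : ℕ) (B : Fin N → ℚ) :
    ∑ m ∈ Finset.range (N+1), (-1:ℚ)^m * (N.choose m) * ∏ i : Fin N, (B i - (m:ℚ))
      = (N.factorial : ℚ) := by
  have hexp : ∀ m : ℕ, ∏ i : Fin N, (B i - (m:ℚ))
      = ∑ t ∈ (Finset.univ : Finset (Fin N)).powerset,
          (∏ i ∈ t, B i) * ((-1:ℚ)^(N - t.card) * (m:ℚ)^(N - t.card)) := by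
    intro m
    have : ∀ i : Fin N, B i - (m:ℚ) = B i + (-(m:ℚ)) := fun i => by ring
    rw [Finset.prod_congr rfl (fun i _ => this i), Finset.prod_add]
    refine Finset.sum_congr rfl (fun t ht => ?_)
    rw [Finset.prod_const]
    congr 1
    rw [Finset.card_sdiff_of_subset (Finset.mem_powerset.mp ht), Finset.card_univ, Fintype.card_fin]
    rw [neg_pow]
  calc ∑ m ∈ Finset.range (N+1), (-1:ℚ)^m * (N.choose m) * ∏ i : Fin N, (B i - (m:ℚ))
      = ∑ t ∈ (Finset.univ : Finset (Fin N)).powerset,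
          (∏ i ∈ t, B i) * ((-1:ℚ)^(N - t.card) *
            ∑ m ∈ Finset.range (N+1), (-1:ℚ)^m * (N.choose m) * (m:ℚ)^(N - t.card)) := by
        simp only [hexp, Finset.mul_sum]
        rw [Finset.sum_comm]
        refine Finset.sum_congr rfl (fun t ht => ?_)
        refine Finset.sum_congr rfl (fun m hm => ?_)
        ring
    _ = (N.factorial : ℚ) := by
        have hval : ∀ t ∈ (Finset.univ : Finset (Fin N)).powerset,
            (∏ i ∈ t, B i) * ((-1:ℚ)^(N - t.card) *
              ∑ m ∈ Finset.range (N+1), (-1:ℚ)^m * (N.choose m) * (m:ℚ)^(N - t.card))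
            = if t = ∅ then (N.factorial : ℚ) else 0 := by
          intro t ht
          rw [alt_sum_choose_pow N (N - t.card) (Nat.sub_le N t.card)]
          by_cases h : t = ∅
          · subst h
            simp only [Finset.prod_empty, Finset.card_empty, Nat.sub_zero, one_mul, if_true]
            rw [← mul_assoc, ← pow_add, Even.neg_one_pow ⟨N, rfl⟩, one_mul]
          · have hc : t.card ≠ 0 := by simpa [Finset.card_eq_zero] using h
            have hcle : t.card ≤ N := by
              simpa using Finset.card_le_card (Finset.mem_powerset.mp ht)
            rw [if_neg (by omega), if_neg h]
            ring
        rw [Finset.sum_congr rfl hval, Finset.sum_ite_eq' _ ∅]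
        rw [if_pos (by simp)]

private lemma prod_pairs_eq_double {M : Type*} [CommMonoid M] (N : ℕ) (f : Fin N → Fin N → M) :
    ∏ p ∈ Finset.univ.filter (fun p : Fin N × Fin N => p.1 < p.2), f p.1 p.2
      = ∏ j : Fin N, ∏ i : Fin N, if i < j then f i j else 1 := by
  rw [Finset.prod_filter]
  rw [Fintype.prod_prod_type]
  rw [Finset.prod_comm]

private lemma prod_pairs_split {M : Type*} [CommMonoid M] (n : ℕ) (f : Fin (n+1) → Fin (n+1) → M) :
    ∏ p ∈ Finset.univ.filter (fun p : Fin (n+1) × Fin (n+1) => p.1 < p.2), f p.1 p.2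
      = (∏ p ∈ Finset.univ.filter (fun p : Fin n × Fin n => p.1 < p.2),
          f p.1.castSucc p.2.castSucc)
        * ∏ i : Fin n, f i.castSucc (Fin.last n) := by
  rw [prod_pairs_eq_double, prod_pairs_eq_double n (fun i j => f i.castSucc j.castSucc)]
  rw [Fin.prod_univ_castSucc]
  congr 1
  · refine Finset.prod_congr rfl (fun j _ => ?_)
    rw [Fin.prod_univ_castSucc (f := fun i : Fin (n+1) => if i < j.castSucc then f i j.castSucc else 1)]
    simp only [Fin.castSucc_lt_castSucc_iff]
    rw [if_neg (by simp [Fin.lt_def]), mul_one]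
  · rw [Fin.prod_univ_castSucc (f := fun i : Fin (n+1) => if i < Fin.last n then f i (Fin.last n) else 1)]
    simp [Fin.castSucc_lt_last]

private lemma holmanF_zero (lam : ℕ → ℕ) (z : ℚ) : holmanF 0 lam z = 1 := by
  simp [holmanF]

set_option maxHeartbeats 2000000 in
private lemma holmanF_rec (n : ℕ) (lam : ℕ → ℕ)
    (hA : ∀ i : Fin n, ((lam (i.val+1) : ℚ) - (lam (n+1) : ℚ) + (n : ℚ) - (i.val : ℚ)) ≠ 0) :
    (∏ i : Fin n, ((lam (i.val+1) : ℚ) - (lam (n+1) : ℚ) + (n : ℚ) - (i.val : ℚ)))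
        * holmanF (n+1) lam 1
      = (n.factorial : ℚ) * holmanF n lam 1 := by
  set D : ℚ := ∏ i : Fin n, ((lam (i.val+1) : ℚ) - (lam (n+1) : ℚ) + (n : ℚ) - (i.val : ℚ)) with hD
  have hDne : D ≠ 0 := Finset.prod_ne_zero_iff.mpr (fun i _ => hA i)
  have step1 : holmanF (n+1) lam 1 =
      ∑ κ' : (i : Fin n) → Fin (i.val + 1), ∑ m : Fin (n+1),
        (∏ p ∈ Finset.univ.filter (fun p : Fin (n+1) × Fin (n+1) => p.1 < p.2),
          (((lam (p.1.val + 1) : ℚ) - (lam (p.2.val + 1) : ℚ) + (p.2.val : ℚ) - (p.1.val : ℚ)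
              + (((Fin.snoc κ' m : (i : Fin (n+1)) → Fin (i.val+1)) p.1).val : ℚ)
              - (((Fin.snoc κ' m : (i : Fin (n+1)) → Fin (i.val+1)) p.2).val : ℚ)) /
            ((lam (p.1.val + 1) : ℚ) - (lam (p.2.val + 1) : ℚ) + (p.2.val : ℚ) - (p.1.val : ℚ)))) *
        (∏ i : Fin (n+1), (Nat.choose i.val (((Fin.snoc κ' m : (i : Fin (n+1)) → Fin (i.val+1)) i)).val : ℚ)) *
        (-(1:ℚ)) ^ (∑ i : Fin (n+1), (((Fin.snoc κ' m : (i : Fin (n+1)) → Fin (i.val+1)) i)).val) := by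
    rw [holmanF, ← Equiv.sum_comp (Fin.snocEquiv (fun i : Fin (n+1) => Fin (i.val+1)))]
    rw [Fintype.sum_prod_type, Finset.sum_comm]
    rfl
  have inner : ∀ κ' : (i : Fin n) → Fin (i.val + 1), ∀ m : Fin (n+1),
      (∏ p ∈ Finset.univ.filter (fun p : Fin (n+1) × Fin (n+1) => p.1 < p.2),
          (((lam (p.1.val + 1) : ℚ) - (lam (p.2.val + 1) : ℚ) + (p.2.val : ℚ) - (p.1.val : ℚ)
              + (((Fin.snoc κ' m : (i : Fin (n+1)) → Fin (i.val+1)) p.1).val : ℚ)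
              - (((Fin.snoc κ' m : (i : Fin (n+1)) → Fin (i.val+1)) p.2).val : ℚ)) /
            ((lam (p.1.val + 1) : ℚ) - (lam (p.2.val + 1) : ℚ) + (p.2.val : ℚ) - (p.1.val : ℚ)))) *
        (∏ i : Fin (n+1), (Nat.choose i.val (((Fin.snoc κ' m : (i : Fin (n+1)) → Fin (i.val+1)) i)).val : ℚ)) *
        (-(1:ℚ)) ^ (∑ i : Fin (n+1), (((Fin.snoc κ' m : (i : Fin (n+1)) → Fin (i.val+1)) i)).val)
      = ((∏ p ∈ Finset.univ.filter (fun p : Fin n × Fin n => p.1 < p.2),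
            (((lam (p.1.val + 1) : ℚ) - (lam (p.2.val + 1) : ℚ) + (p.2.val : ℚ) - (p.1.val : ℚ)
                + ((κ' p.1).val : ℚ) - ((κ' p.2).val : ℚ)) /
              ((lam (p.1.val + 1) : ℚ) - (lam (p.2.val + 1) : ℚ) + (p.2.val : ℚ) - (p.1.val : ℚ)))) *
          (∏ i : Fin n, (Nat.choose i.val (κ' i).val : ℚ)) *
          (-(1:ℚ)) ^ (∑ i : Fin n, (κ' i).val) / D) *
        ((-1:ℚ) ^ (m.val) * (n.choose m.val : ℚ) *
          ∏ i : Fin n, (((lam (i.val+1) : ℚ) - (lam (n+1) : ℚ) + (n : ℚ) - (i.val : ℚ)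
              + ((κ' i).val : ℚ)) - (m.val : ℚ))) := by
    intro κ' m
    rw [prod_pairs_split n (f := fun a b =>
      (((lam (a.val + 1) : ℚ) - (lam (b.val + 1) : ℚ) + (b.val : ℚ) - (a.val : ℚ)
          + (((Fin.snoc κ' m : (i : Fin (n+1)) → Fin (i.val+1)) a).val : ℚ)
          - (((Fin.snoc κ' m : (i : Fin (n+1)) → Fin (i.val+1)) b).val : ℚ)) /
        ((lam (a.val + 1) : ℚ) - (lam (b.val + 1) : ℚ) + (b.val : ℚ) - (a.val : ℚ))))]
    rw [Fin.prod_univ_castSucc (f := fun i : Fin (n+1) =>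
        (Nat.choose i.val (((Fin.snoc κ' m : (i : Fin (n+1)) → Fin (i.val+1)) i)).val : ℚ))]
    rw [Fin.sum_univ_castSucc (f := fun i : Fin (n+1) =>
        (((Fin.snoc κ' m : (i : Fin (n+1)) → Fin (i.val+1)) i)).val)]
    simp only [Fin.snoc_castSucc, Fin.snoc_last, Fin.coe_castSucc, Fin.val_last]
    rw [pow_add]
    have hsplit : (∏ i : Fin n,
        (((lam (i.val + 1) : ℚ) - (lam (n + 1) : ℚ) + (n : ℚ) - (i.val : ℚ)
            + ((κ' i).val : ℚ) - ((m.val : ℚ))) /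
          ((lam (i.val + 1) : ℚ) - (lam (n + 1) : ℚ) + (n : ℚ) - (i.val : ℚ))))
        = (∏ i : Fin n, (((lam (i.val+1) : ℚ) - (lam (n+1) : ℚ) + (n : ℚ) - (i.val : ℚ)
              + ((κ' i).val : ℚ)) - (m.val : ℚ))) / D := by
      rw [hD, ← Finset.prod_div_distrib]
    rw [hsplit]
    field_simp
    try ring
  have step3 : ∀ (X : ℚ) (B : Fin n → ℚ),
      ∑ m : Fin (n+1), (X / D) * ((-1:ℚ)^(m.val) * (n.choose m.val : ℚ)
          * ∏ i : Fin n, (B i - (m.val : ℚ)))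
        = X / D * (n.factorial : ℚ) := by
    intro X B
    rw [← Finset.mul_sum]
    congr 1
    rw [← keysum' n B]
    exact Fin.sum_univ_eq_sum_range
      (fun m => (-1:ℚ)^m * (n.choose m : ℚ) * ∏ i : Fin n, (B i - (m:ℚ))) (n+1)
  have hgen : ∀ X : ℚ, D * (X / D * (n.factorial : ℚ)) = (n.factorial : ℚ) * X := by
    intro X
    field_simp
  rw [step1, Finset.sum_congr rfl (fun κ' _ => Finset.sum_congr rfl (fun m _ => inner κ' m)),
    Finset.sum_congr rfl (fun κ' _ => step3 _ _)]
  rw [holmanF, Finset.mul_sum, Finset.mul_sum]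
  exact Finset.sum_congr rfl (fun κ' _ => hgen _)

private lemma holmanF_shift (n : ℕ) (lam lam' : ℕ → ℕ) (c : ℕ)
    (h : ∀ i, 1 ≤ i → i ≤ n → lam' i = lam i + c) (z : ℚ) :
    holmanF n lam' z = holmanF n lam z := by
  unfold holmanF
  refine Finset.sum_congr rfl (fun κ _ => ?_)
  congr 2
  refine Finset.prod_congr rfl (fun p hp => ?_)
  rw [h (p.1.val + 1) (by omega) (by have := p.1.isLt; omega),
      h (p.2.val + 1) (by omega) (by have := p.2.isLt; omega)]
  push_cast
  ring_nf

private lemma staircase_A_pos (k n : ℕ) (i : Fin n) :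
    0 < ((k - (i.val+1) : ℕ) : ℚ) - ((k - (n+1) : ℕ) : ℚ) + (n : ℚ) - (i.val : ℚ) := by
  have h1 : ((k - (n+1) : ℕ) + i.val : ℕ) < ((k - (i.val+1) : ℕ) + n : ℕ) := by
    have := i.isLt; omega
  have h2 : (((k - (n+1) : ℕ) + i.val : ℕ) : ℚ) < (((k - (i.val+1) : ℕ) + n : ℕ) : ℚ) := by
    exact_mod_cast h1
  push_cast at h2
  linarith

private lemma doubling (k : ℕ) :
    Nat.factorial (2*k) = 2^k * Nat.factorial k * ∏ j ∈ Finset.range k, (2*j+1) := by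
  induction k with
  | zero => rfl
  | succ k IH =>
    have h2 : 2*(k+1) = (2*k+1)+1 := by ring
    rw [h2, Nat.factorial_succ, Nat.factorial_succ, IH, Finset.prod_range_succ,
        Nat.factorial_succ]
    ring

private lemma scalar_step (k d : ℕ) :
    (∏ j ∈ Finset.range k, ((d:ℚ) + 1 + 2*j)) * ∏ i ∈ Finset.range k, (2*(k:ℚ) + d - 2*i)
  = (∏ j ∈ Finset.range k, ((d:ℚ) + 2 + 2*j)) * ∏ i ∈ Finset.range k, (2*(k:ℚ) + d - 1 - 2*i) := by
  rw [← Finset.prod_range_reflect (fun i => 2*(k:ℚ) + d - 2*i) k,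
      ← Finset.prod_range_reflect (fun i => 2*(k:ℚ) + d - 1 - 2*i) k]
  rw [mul_comm]
  congr 1
  · refine Finset.prod_congr rfl (fun j hj => ?_)
    have hj' := Finset.mem_range.mp hj
    have : ((k - 1 - j : ℕ) : ℚ) = (k:ℚ) - 1 - j := by
      have : k - 1 - j = k - (1 + j) := by omega
      rw [this, Nat.cast_sub (by omega)]
      push_cast; ring
    rw [this]
    ring
  · refine Finset.prod_congr rfl (fun j hj => ?_)
    have hj' := Finset.mem_range.mp hj
    have : ((k - 1 - j : ℕ) : ℚ) = (k:ℚ) - 1 - j := by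
      have : k - 1 - j = k - (1 + j) := by omega
      rw [this, Nat.cast_sub (by omega)]
      push_cast; ring
    rw [this]
    ring

private lemma D_identity (k n : ℕ) (hkn : k ≤ n) :
    (∏ j ∈ Finset.range k, ((n:ℚ) - k + 1 + 2*j))
      * (∏ i : Fin n, (((k+1 - (i.val+1) : ℕ) : ℚ) - ((k+1 - (n+1) : ℕ) : ℚ) + (n:ℚ) - (i.val:ℚ)))
    = (∏ j ∈ Finset.range k, ((n:ℚ) + 1 - k + 1 + 2*j))
      * (∏ i : Fin n, (((k - (i.val+1) : ℕ) : ℚ) - ((k - (n+1) : ℕ) : ℚ) + (n:ℚ) - (i.val:ℚ))) := by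
  obtain ⟨d, rfl⟩ : ∃ d, n = k + d := ⟨n - k, by omega⟩
  rw [Fin.prod_univ_eq_prod_range
    (fun i => (((k+1 - (i+1) : ℕ) : ℚ) - ((k+1 - (k+d+1) : ℕ) : ℚ) + ((k+d:ℕ):ℚ) - (i:ℚ))) (k+d)]
  rw [Fin.prod_univ_eq_prod_range
    (fun i => (((k - (i+1) : ℕ) : ℚ) - ((k - (k+d+1) : ℕ) : ℚ) + ((k+d:ℕ):ℚ) - (i:ℚ))) (k+d)]
  rw [Finset.prod_range_add (fun i => (((k+1 - (i+1) : ℕ) : ℚ) - ((k+1 - (k+d+1) : ℕ) : ℚ) + ((k+d:ℕ):ℚ) - (i:ℚ))) k d]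
  rw [Finset.prod_range_add (fun i => (((k - (i+1) : ℕ) : ℚ) - ((k - (k+d+1) : ℕ) : ℚ) + ((k+d:ℕ):ℚ) - (i:ℚ))) k d]
  have htail : ∀ i ∈ Finset.range d,
      (((k+1 - (k+i+1) : ℕ) : ℚ) - ((k+1 - (k+d+1) : ℕ) : ℚ) + ((k+d:ℕ):ℚ) - ((k+i:ℕ):ℚ))
      = (((k - (k+i+1) : ℕ) : ℚ) - ((k - (k+d+1) : ℕ) : ℚ) + ((k+d:ℕ):ℚ) - ((k+i:ℕ):ℚ)) := by
    intro i hi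
    have h1 : k+1 - (k+i+1) = 0 := by omega
    have h2 : k+1 - (k+d+1) = 0 := by omega
    have h3 : k - (k+i+1) = 0 := by omega
    have h4 : k - (k+d+1) = 0 := by omega
    rw [h1, h2, h3, h4]
  have hhead1 : ∀ i ∈ Finset.range k,
      (((k+1 - (i+1) : ℕ) : ℚ) - ((k+1 - (k+d+1) : ℕ) : ℚ) + ((k+d:ℕ):ℚ) - (i:ℚ))
      = (2*(k:ℚ) + d - 2*i) := by
    intro i hi
    have hi' := Finset.mem_range.mp hi
    have h1 : k+1 - (i+1) = k - i := by omega
    have h2 : k+1 - (k+d+1) = 0 := by omega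
    rw [h1, h2, Nat.cast_sub (by omega : i ≤ k)]
    push_cast
    ring
  have hhead2 : ∀ i ∈ Finset.range k,
      (((k - (i+1) : ℕ) : ℚ) - ((k - (k+d+1) : ℕ) : ℚ) + ((k+d:ℕ):ℚ) - (i:ℚ))
      = (2*(k:ℚ) + d - 1 - 2*i) := by
    intro i hi
    have hi' := Finset.mem_range.mp hi
    have h1 : k - (i+1) = k - (i+1) := rfl
    have h2 : k - (k+d+1) = 0 := by omega
    rw [h2, Nat.cast_sub (by omega : i+1 ≤ k)]
    push_cast
    ring
  rw [Finset.prod_congr rfl htail, Finset.prod_congr rfl hhead1, Finset.prod_congr rfl hhead2]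
  have hB1 : ∀ j ∈ Finset.range k, (((k+d:ℕ):ℚ) - k + 1 + 2*(j:ℚ)) = ((d:ℚ) + 1 + 2*j) := by
    intro j hj; push_cast; ring
  have hB2 : ∀ j ∈ Finset.range k, (((k+d:ℕ):ℚ) + 1 - k + 1 + 2*(j:ℚ)) = ((d:ℚ) + 2 + 2*j) := by
    intro j hj; push_cast; ring
  rw [Finset.prod_congr rfl hB1, Finset.prod_congr rfl hB2]
  rw [← mul_assoc, ← mul_assoc, scalar_step k d]

private lemma holmanF_staircase_pos (k : ℕ) : ∀ n, 0 < holmanF n (fun i => k - i) 1 := by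
  intro n
  induction n with
  | zero => rw [holmanF_zero]; norm_num
  | succ n IH =>
    have rk := holmanF_rec n (fun i => k - i) (fun i => (staircase_A_pos k n i).ne')
    beta_reduce at rk
    have hD : 0 < ∏ i : Fin n, (((k - (i.val+1) : ℕ) : ℚ) - ((k - (n+1) : ℕ) : ℚ) + (n:ℚ) - (i.val:ℚ)) :=
      Finset.prod_pos (fun i _ => staircase_A_pos k n i)
    have hpos : 0 < (n.factorial : ℚ) * holmanF n (fun i => k - i) 1 := by positivity
    nlinarith [rk, hD, hpos]

private lemma main_T (k : ℕ) (hk : 1 ≤ k) : ∀ n, k ≤ n →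
    (Nat.factorial (2*k) : ℚ) * holmanF n (fun i => k - i) 1
      = 2 ^ k * (Nat.factorial k : ℚ) * (∏ j ∈ Finset.range k, ((n : ℚ) - k + 1 + 2 * j))
          * holmanF n (fun i => k + 1 - i) 1 := by
  intro n hn
  induction n, hn using Nat.le_induction with
  | base =>
    rw [holmanF_shift k (fun i => k - i) (fun i => k + 1 - i) 1 (fun i h1 h2 => by show k + 1 - i = k - i + 1; omega) 1]
    have hprod : ∏ j ∈ Finset.range k, ((k : ℚ) - k + 1 + 2 * j)
        = ((∏ j ∈ Finset.range k, (2*j+1) : ℕ) : ℚ) := by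
      push_cast
      exact Finset.prod_congr rfl (fun j _ => by ring)
    rw [hprod]
    have := doubling k
    have hQ : ((2*k).factorial : ℚ) = 2^k * (k.factorial : ℚ) * ((∏ j ∈ Finset.range k, (2*j+1) : ℕ) : ℚ) := by
      exact_mod_cast congrArg (fun x : ℕ => (x : ℚ)) this
    rw [hQ]
  | succ n hn IH =>
    have rk := holmanF_rec n (fun i => k - i) (fun i => (staircase_A_pos k n i).ne')
    have rk1 := holmanF_rec n (fun i => k + 1 - i) (fun i => (staircase_A_pos (k+1) n i).ne')
    beta_reduce at rk rk1
    have key := D_identity k n hn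
    have hDk : 0 < ∏ i : Fin n, (((k - (i.val+1) : ℕ) : ℚ) - ((k - (n+1) : ℕ) : ℚ) + (n:ℚ) - (i.val:ℚ)) :=
      Finset.prod_pos (fun i _ => staircase_A_pos k n i)
    have hDk1 : 0 < ∏ i : Fin n, (((k+1 - (i.val+1) : ℕ) : ℚ) - ((k+1 - (n+1) : ℕ) : ℚ) + (n:ℚ) - (i.val:ℚ)) :=
      Finset.prod_pos (fun i _ => staircase_A_pos (k+1) n i)
    push_cast
    refine mul_left_cancel₀ (mul_ne_zero hDk.ne' hDk1.ne') ?_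
    linear_combination
      ((∏ i : Fin n, (((k+1 - (i.val+1) : ℕ) : ℚ) - ((k+1 - (n+1) : ℕ) : ℚ) + (n:ℚ) - (i.val:ℚ)))
          * ((Nat.factorial (2*k) : ℚ))) * rk
      + ((∏ i : Fin n, (((k+1 - (i.val+1) : ℕ) : ℚ) - ((k+1 - (n+1) : ℕ) : ℚ) + (n:ℚ) - (i.val:ℚ)))
          * (n.factorial : ℚ)) * IH
      + (2^k * (Nat.factorial k : ℚ) * (n.factorial : ℚ) * holmanF n (fun i => k + 1 - i) 1) * key
      - (2^k * (Nat.factorial k : ℚ) * (∏ j ∈ Finset.range k, ((n:ℚ) + 1 - k + 1 + 2*j))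
          * (∏ i : Fin n, (((k - (i.val+1) : ℕ) : ℚ) - ((k - (n+1) : ℕ) : ℚ) + (n:ℚ) - (i.val:ℚ)))) * rk1

private lemma jacobi_eval (k n : ℕ) :
    jacobiP k (((n : ℚ) - k - 1) / 2) ((-(n : ℚ) - k - 1) / 2) (-1)
      = (∏ j ∈ Finset.range k, ((n:ℚ) - k + 1 + 2*j)) / (2^k * (Nat.factorial k : ℚ)) := by
  unfold jacobiP
  rw [Finset.sum_eq_single k]
  · have h2 : ((-1:ℚ) + 1)/2 = 0 := by norm_num
    have h1 : ((-1:ℚ) - 1)/2 = -1 := by norm_num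
    rw [h1, h2, Nat.sub_self, pow_zero, mul_one]
    have hg0 : genBinom ((k:ℚ) + ((n : ℚ) - k - 1) / 2) 0 = 1 := by
      simp [genBinom, Nat.factorial]
    rw [hg0, one_mul]
    unfold genBinom
    have hp : ∏ i ∈ Finset.range k, (((k:ℚ) + (-(n : ℚ) - k - 1) / 2) - i)
        = (-(1:ℚ)/2)^k * ∏ i ∈ Finset.range k, ((n:ℚ) - k + 1 + 2*i) := by
      have hfac : ∀ i ∈ Finset.range k,
          ((k:ℚ) + (-(n : ℚ) - k - 1) / 2) - i = (-(1:ℚ)/2) * ((n:ℚ) - k + 1 + 2*i) := by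
        intro i _; push_cast; ring
      rw [Finset.prod_congr rfl hfac, Finset.prod_mul_distrib, Finset.prod_const,
        Finset.card_range]
    rw [hp]
    rw [div_mul_eq_mul_div]
    rw [show (-(1:ℚ)/2)^k * (∏ i ∈ Finset.range k, ((n:ℚ) - k + 1 + 2*i)) * (-1:ℚ)^k
        = ((-(1:ℚ)/2) * (-1))^k * ∏ i ∈ Finset.range k, ((n:ℚ) - k + 1 + 2*i) by
      rw [mul_pow]; ring]
    rw [show ((-(1:ℚ)/2) * (-1)) = 1/2 by norm_num]
    rw [one_div, inv_pow]
    rw [div_eq_div_iff (by positivity) (by positivity)]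
    field_simp
  · intro r hr hne
    have hr' := Finset.mem_range.mp hr
    have h2 : ((-1:ℚ) + 1)/2 = 0 := by norm_num
    rw [h2, zero_pow (by omega : k - r ≠ 0), mul_zero]
  · intro h
    exact absurd (Finset.self_mem_range_succ k) h

end HolmanAux

/-- For `1 ≤ k ≤ n`, the terminating Holman hypergeometric values at argument `1` for the
adjacent staircase shapes `δ_k` (row lengths `i ↦ k - i`) and `δ_{k+1}` satisfy
`F^{(n)}_{δ_k}(1) / F^{(n)}_{δ_{k+1}}(1) = (2^{2k} (k!)² / (2k)!) · P_k^{(α,β)}(-1)` with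
`α = (n-k-1)/2`, `β = (-n-k-1)/2`; equivalently,
`(2k)! · F^{(n)}_{δ_k}(1) = 2^k k! (∏_{j=0}^{k-1} (n-k+1+2j)) · F^{(n)}_{δ_{k+1}}(1)`. -/
theorem holman_staircase_ratio_jacobi (k n : ℕ) (hk : 1 ≤ k) (hkn : k ≤ n) :
    (holmanF n (fun i => k - i) 1 / holmanF n (fun i => k + 1 - i) 1
        = 2 ^ (2 * k) * (Nat.factorial k : ℚ) ^ 2 / (Nat.factorial (2 * k) : ℚ) *
            jacobiP k (((n : ℚ) - k - 1) / 2) ((-(n : ℚ) - k - 1) / 2) (-1)) ∧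
      ((Nat.factorial (2 * k) : ℚ) * holmanF n (fun i => k - i) 1
        = 2 ^ k * (Nat.factorial k : ℚ) *
            (∏ j ∈ Finset.range k, ((n : ℚ) - k + 1 + 2 * j)) *
            holmanF n (fun i => k + 1 - i) 1) := by
  have hT := main_T k hk n hkn
  have hpos := holmanF_staircase_pos (k+1) n
  have hpos' : holmanF n (fun i => k + 1 - i) 1 > 0 := hpos
  refine ⟨?_, hT⟩
  rw [jacobi_eval k n]
  rw [div_mul_div_comm]
  rw [div_eq_div_iff hpos'.ne' (by positivity)]
  linear_combination (2^k * (Nat.factorial k : ℚ)) * hT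
end
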